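/- In the Gaussian bandit with additional information, for every i ∈ [K] and λ > 0, L^λ_i(m,d) = (1/(2λ)) ∑_{j=1}^K η^λ_{jj}(f(m,d)) d_{jj}² (s_{ij}/(1 + d_{jj}s_{ij})) g_j(m,d)², where g_j(m,d) := ∫_ℝ r_j'(m_j + (d_{jj} + s_{jj}^{−1})^{1/2} z) φ(z) dz. -/

import Mathlib

open MeasureTheory

noncomputable section

namespace ARC

variable {K p : ℕ}

/-- Standard Gaussian density. -/
def gauss (x : ℝ) : ℝ := (Real.sqrt (2 * Real.pi))⁻¹ * Real.exp (-x ^ 2 / 2)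

/-- `ν^λ(a) = (∂_a S)(a/λ)`. -/
def nu (S : (Fin K → ℝ) → ℝ) (lam : ℝ) (a : Fin K → ℝ) : Fin K → ℝ :=
  fun j => fderiv ℝ S (lam⁻¹ • a) (Pi.single j 1)

/-- `η^λ(a) = (∂²_a S)(a/λ)`. -/
def eta (S : (Fin K → ℝ) → ℝ) (lam : ℝ) (a : Fin K → ℝ) : Fin K → Fin K → ℝ :=
  fun j k => fderiv ℝ (fun x => fderiv ℝ S x (Pi.single k 1)) (lam⁻¹ • a) (Pi.single j 1)

/-- The maximum of a vector `a : Fin K → ℝ` (needs `0 < K`). -/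
def fmax (hK : 0 < K) (a : Fin K → ℝ) : ℝ :=
  Finset.univ.sup' ⟨⟨0, hK⟩, Finset.mem_univ _⟩ a

/-- A smooth max approximator. -/
structure IsSmoothMax (hK : 0 < K) (S : (Fin K → ℝ) → ℝ) : Prop where
  smooth : ContDiff ℝ 3 S
  bddDeriv : ∃ C : ℝ, ∀ x, ∀ k ∈ ({1, 2, 3} : Finset ℕ), ‖iteratedFDeriv ℝ k S x‖ ≤ C
  mono : Monotone S
  translate : ∀ (a : Fin K → ℝ) (c : ℝ), S (fun i => a i + c) = S a + c
  convex : ConvexOn ℝ Set.univ S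
  approx : ∀ ε > (0 : ℝ), ∃ δ > (0 : ℝ), ∀ lam : ℝ, 0 < lam → lam < δ →
    ∀ a : Fin K → ℝ, |lam * S (lam⁻¹ • a) - fmax hK a| ≤ ε

/-- Partial gradient in `m` of `f_j` (matrix-valued `d`). -/
def gradMm (f : Fin K → (Fin p → ℝ) → (Fin p → Fin p → ℝ) → ℝ) (j : Fin K)
    (m : Fin p → ℝ) (d : Fin p → Fin p → ℝ) : Fin p → ℝ :=
  fun k => fderiv ℝ (fun m' => f j m' d) m (Pi.single k 1)

/-- Partial gradient in the matrix variable `d` of `f_j`, as a `p × p` matrix. -/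
def gradDm (f : Fin K → (Fin p → ℝ) → (Fin p → Fin p → ℝ) → ℝ) (j : Fin K)
    (m : Fin p → ℝ) (d : Fin p → Fin p → ℝ) : Fin p → Fin p → ℝ :=
  fun k l => fderiv ℝ (fun d' => f j m d') d (Pi.single k (Pi.single l 1))

/-- Hessian in `m` of `f_j`, as a `p × p` matrix (matrix-valued `d`). -/
def hessMm (f : Fin K → (Fin p → ℝ) → (Fin p → Fin p → ℝ) → ℝ) (j : Fin K)
    (m : Fin p → ℝ) (d : Fin p → Fin p → ℝ) : Fin p → Fin p → ℝ :=
  fun k l =>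
    fderiv ℝ (fun m' => fderiv ℝ (fun m'' => f j m'' d) m' (Pi.single l 1)) m (Pi.single k 1)

/-- The learning premium `L^λ(m,d) ∈ ℝ^K` in the case where the `d`-variable is a
`p × p` matrix, parametrised by the softmax `nuF` and its derivative `etaF`
(both already evaluated at scale `λ`), with `σσᵀ` supplied as `ssT`. -/
def Lmat (nuF : (Fin K → ℝ) → Fin K → ℝ) (etaF : (Fin K → ℝ) → Fin K → Fin K → ℝ)
    (lam : ℝ) (f : Fin K → (Fin p → ℝ) → (Fin p → Fin p → ℝ) → ℝ)
    (μ : Fin K → (Fin p → ℝ) → (Fin p → Fin p → ℝ) → Fin p → ℝ)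
    (b ssT : Fin K → (Fin p → ℝ) → (Fin p → Fin p → ℝ) → Fin p → Fin p → ℝ)
    (m : Fin p → ℝ) (d : Fin p → Fin p → ℝ) : Fin K → ℝ :=
  fun i =>
    (∑ k, ∑ l, (∑ j, nuF (fun j' => f j' m d) j * gradDm f j m d k l) * b i m d k l) +
    (∑ k, (∑ j, nuF (fun j' => f j' m d) j * gradMm f j m d k) * μ i m d k) +
    (1 / 2) * ∑ k, ∑ l,
      ((∑ j, nuF (fun j' => f j' m d) j * hessMm f j m d k l) +
        lam⁻¹ * ∑ j, ∑ j', etaF (fun j'' => f j'' m d) j j' *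
          gradMm f j m d k * gradMm f j' m d l) *
      ssT i m d k l

/-- Polynomial growth of `r` together with its first two derivatives. -/
def PolyGrowth2 (r : ℝ → ℝ) : Prop :=
  ∃ (C : ℝ) (n : ℕ), ∀ x : ℝ,
    |r x| ≤ C * (1 + |x|) ^ n ∧ |deriv r x| ≤ C * (1 + |x|) ^ n ∧
    |deriv (deriv r) x| ≤ C * (1 + |x|) ^ n

end ARC

/-!
Each `f j` is `E[r_j(m_j + √(d_jj + 1/s_jj) Z)]` with `Z` standard normal, so it depends only
on `m_j` and `d_jj`. Gaussian integration by parts (`E[g(Z) Z] = E[g'(Z)]`) turns the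
`d_jj`-derivative into half of the second `m_j`-derivative: `f_j` solves the heat equation.
Since `b_i = -σ_iσ_iᵀ` is diagonal, the two terms of `L^λ_i` carrying `ν^λ` therefore cancel,
and only the `η^λ` term survives.
-/

open Real Filter Topology

namespace ARC

def PolyGrowth (q : ℝ → ℝ) : Prop :=
  ∃ (C : ℝ) (n : ℕ), ∀ x, |q x| ≤ C * (1 + |x|) ^ n

lemma PolyGrowth2.polyGrowth {r : ℝ → ℝ} (h : PolyGrowth2 r) :
    PolyGrowth r ∧ PolyGrowth (deriv r) ∧ PolyGrowth (deriv (deriv r)) := by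
  obtain ⟨C, n, h⟩ := h
  exact ⟨⟨C, n, fun x => (h x).1⟩, ⟨C, n, fun x => (h x).2.1⟩, ⟨C, n, fun x => (h x).2.2⟩⟩

lemma nonneg_of_abs_le_mul_one_add_abs_pow {q : ℝ → ℝ} {C : ℝ} {n : ℕ}
    (hq : ∀ y, |q y| ≤ C * (1 + |y|) ^ n) : 0 ≤ C := by
  simpa using (abs_nonneg _).trans (hq 0)

lemma abs_le_of_abs_le_mul_one_add_abs {q : ℝ → ℝ} {C : ℝ} {n : ℕ}
    (hq : ∀ y, |q y| ≤ C * (1 + |y|) ^ n) {A x y : ℝ} (hy : |y| ≤ A * (1 + |x|)) :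
    |q y| ≤ C * (1 + A) ^ n * (1 + |x|) ^ n := by
  have hC := nonneg_of_abs_le_mul_one_add_abs_pow hq
  calc |q y| ≤ C * (1 + |y|) ^ n := hq y
    _ ≤ C * ((1 + A) * (1 + |x|)) ^ n := by
        gcongr
        nlinarith [abs_nonneg x]
    _ = C * (1 + A) ^ n * (1 + |x|) ^ n := by rw [mul_pow]; ring

lemma PolyGrowth.comp {q p : ℝ → ℝ} (hq : PolyGrowth q) {A : ℝ}
    (hp : ∀ x, |p x| ≤ A * (1 + |x|)) : PolyGrowth fun x => q (p x) := by
  obtain ⟨C, n, hq⟩ := hq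
  exact ⟨_, n, fun x => abs_le_of_abs_le_mul_one_add_abs hq (hp x)⟩

lemma PolyGrowth.comp_affine {q : ℝ → ℝ} (hq : PolyGrowth q) (t a : ℝ) :
    PolyGrowth fun x => q (t + a * x) := by
  refine hq.comp (A := |t| + |a|) fun x => ?_
  calc |t + a * x| ≤ |t| + |a| * |x| := by rw [← abs_mul]; exact abs_add_le _ _
    _ ≤ (|t| + |a|) * (1 + |x|) := by nlinarith [abs_nonneg t, abs_nonneg a, abs_nonneg x]

lemma PolyGrowth.mul_const {q : ℝ → ℝ} (hq : PolyGrowth q) (c : ℝ) :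
    PolyGrowth fun x => q x * c := by
  obtain ⟨C, n, hq⟩ := hq
  refine ⟨C * |c|, n, fun x => ?_⟩
  rw [abs_mul, mul_right_comm]
  exact mul_le_mul_of_nonneg_right (hq x) (abs_nonneg c)

lemma PolyGrowth.mul_id {q : ℝ → ℝ} (hq : PolyGrowth q) : PolyGrowth fun x => q x * x := by
  obtain ⟨C, n, hq⟩ := hq
  refine ⟨C, n + 1, fun x => ?_⟩
  have hC := nonneg_of_abs_le_mul_one_add_abs_pow hq
  calc |q x * x| = |q x| * |x| := abs_mul _ _
    _ ≤ C * (1 + |x|) ^ n * (1 + |x|) := by gcongr; exacts [hq x, by linarith]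
    _ = C * (1 + |x|) ^ (n + 1) := by ring

lemma gauss_nonneg (x : ℝ) : 0 ≤ gauss x := by unfold gauss; positivity

@[fun_prop]
lemma continuous_gauss : Continuous gauss := by unfold gauss; fun_prop

lemma hasDerivAt_gauss (x : ℝ) : HasDerivAt gauss (-x * gauss x) x := by
  unfold gauss
  refine ((((hasDerivAt_pow 2 x).neg.div_const 2).exp.const_mul _)).congr_deriv ?_
  simp only [Pi.neg_apply]
  ring

-- Real exponents, to match `integrable_rpow_mul_exp_neg_mul_sq` and
-- `tendsto_rpow_abs_mul_exp_neg_mul_sq_cocompact`.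
lemma one_add_abs_pow_mul_gauss_le (n : ℕ) (x : ℝ) :
    (1 + |x|) ^ n * gauss x ≤
      2 ^ (n - 1) * (√(2 * π))⁻¹ *
        (|x| ^ (0 : ℝ) * rexp (-(1 / 2) * x ^ 2) + |x| ^ (n : ℝ) * rexp (-(1 / 2) * x ^ 2)) := by
  have h := add_pow_le zero_le_one (abs_nonneg x) n
  simp only [one_pow] at h
  calc (1 + |x|) ^ n * gauss x ≤ 2 ^ (n - 1) * (1 + |x| ^ n) * gauss x :=
        mul_le_mul_of_nonneg_right h (gauss_nonneg x)
    _ = _ := by simp only [gauss, rpow_zero, rpow_natCast]; ring_nf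

lemma integrable_one_add_abs_pow_mul_gauss (n : ℕ) :
    Integrable fun x : ℝ => (1 + |x|) ^ n * gauss x := by
  have hs (s : ℕ) : Integrable fun x : ℝ => |x| ^ (s : ℝ) * rexp (-(1 / 2) * x ^ 2) := by
    have hs : (-1 : ℝ) < s := by linarith [s.cast_nonneg (α := ℝ)]
    refine (integrable_rpow_mul_exp_neg_mul_sq (b := 1 / 2) (by norm_num) hs).norm.congr
      (Eventually.of_forall fun x => ?_)
    simp [rpow_natCast]
  refine (((hs 0).add (hs n)).const_mul (2 ^ (n - 1) * (√(2 * π))⁻¹)).mono'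
    ((by fun_prop : Continuous fun x : ℝ => (1 + |x|) ^ n * gauss x).aestronglyMeasurable)
    (Eventually.of_forall fun x => ?_)
  rw [Real.norm_of_nonneg (by have := gauss_nonneg x; positivity)]
  simpa using one_add_abs_pow_mul_gauss_le n x

lemma PolyGrowth.exists_norm_mul_gauss_le {q : ℝ → ℝ} (hq : PolyGrowth q) :
    ∃ (C : ℝ) (n : ℕ), 0 ≤ C ∧ ∀ x, ‖q x * gauss x‖ ≤ C * ((1 + |x|) ^ n * gauss x) := by
  obtain ⟨C, n, hq⟩ := hq
  refine ⟨C, n, nonneg_of_abs_le_mul_one_add_abs_pow hq, fun x => ?_⟩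
  rw [norm_mul, Real.norm_of_nonneg (gauss_nonneg x), ← mul_assoc]
  exact mul_le_mul_of_nonneg_right (hq x) (gauss_nonneg x)

lemma PolyGrowth.integrable_mul_gauss {q : ℝ → ℝ} (hq : PolyGrowth q) (hc : Continuous q) :
    Integrable fun x => q x * gauss x := by
  obtain ⟨C, n, hC, hle⟩ := hq.exists_norm_mul_gauss_le
  exact ((integrable_one_add_abs_pow_mul_gauss n).const_mul C).mono'
    (by fun_prop : Continuous fun x => q x * gauss x).aestronglyMeasurable
    (Eventually.of_forall hle)

lemma PolyGrowth.tendsto_mul_gauss_cocompact {q : ℝ → ℝ} (hq : PolyGrowth q) :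
    Tendsto (fun x => q x * gauss x) (cocompact ℝ) (𝓝 0) := by
  obtain ⟨C, n, hC, hle⟩ := hq.exists_norm_mul_gauss_le
  have hlim := ((tendsto_rpow_abs_mul_exp_neg_mul_sq_cocompact (a := 1 / 2) (by norm_num) 0).add
    (tendsto_rpow_abs_mul_exp_neg_mul_sq_cocompact (a := 1 / 2) (by norm_num) n)).const_mul
    (C * (2 ^ (n - 1) * (√(2 * π))⁻¹))
  rw [add_zero, mul_zero] at hlim
  refine squeeze_zero_norm (fun x => (hle x).trans ?_) hlim
  rw [mul_assoc C]
  exact mul_le_mul_of_nonneg_left (one_add_abs_pow_mul_gauss_le n x) hC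

lemma integral_mul_id_mul_gauss {g g' : ℝ → ℝ} (hg : ∀ x, HasDerivAt g (g' x) x)
    (hg' : Continuous g') (h0 : PolyGrowth g) (h1 : PolyGrowth g') :
    ∫ x, g x * x * gauss x = ∫ x, g' x * gauss x := by
  have hc : Continuous g := continuous_iff_continuousAt.2 fun x => (hg x).continuousAt
  have hderiv (x : ℝ) : HasDerivAt (fun x => g x * gauss x)
      (g' x * gauss x - g x * x * gauss x) x :=
    ((hg x).mul (hasDerivAt_gauss x)).congr_deriv (by ring)
  have I1 := h1.integrable_mul_gauss hg'
  have I2 := h0.mul_id.integrable_mul_gauss (by fun_prop)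
  have h := integral_of_hasDerivAt_of_tendsto hderiv (I1.sub I2)
    (h0.tendsto_mul_gauss_cocompact.mono_left atBot_le_cocompact)
    (h0.tendsto_mul_gauss_cocompact.mono_left atTop_le_cocompact)
  rw [integral_sub I1 I2, sub_self] at h
  exact (sub_eq_zero.1 h).symm

lemma hasDerivAt_integral_comp_add_mul_mul_gauss {q : ℝ → ℝ} (hq : ContDiff ℝ 1 q)
    (h0 : PolyGrowth q) (h1 : PolyGrowth (deriv q)) {g h : ℝ → ℝ} (hg : Continuous g)
    (hh : Continuous h) {B : ℝ} (hgB : ∀ x, |g x| ≤ B * (1 + |x|))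
    (hhB : ∀ x, |h x| ≤ B * (1 + |x|)) (u₀ : ℝ) :
    HasDerivAt (fun u => ∫ x, q (g x + u * h x) * gauss x)
      (∫ x, deriv q (g x + u₀ * h x) * h x * gauss x) u₀ := by
  obtain ⟨C, n, hC⟩ := h1
  have hB : 0 ≤ B := by simpa using (abs_nonneg _).trans (hhB 0)
  have hqc : Continuous q := hq.continuous
  have hq'c : Continuous (deriv q) := hq.continuous_deriv le_rfl
  have hlin (u x : ℝ) : |g x + u * h x| ≤ B * (1 + |u|) * (1 + |x|) := by
    calc |g x + u * h x| ≤ |g x| + |u| * |h x| := by rw [← abs_mul]; exact abs_add_le _ _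
      _ ≤ B * (1 + |x|) + |u| * (B * (1 + |x|)) := by gcongr; exacts [hgB x, hhB x]
      _ = B * (1 + |u|) * (1 + |x|) := by ring
  set A := B * (2 + |u₀|)
  have hball (u : ℝ) (hu : u ∈ Metric.ball u₀ 1) (x : ℝ) : |g x + u * h x| ≤ A * (1 + |x|) := by
    have : |u| ≤ |u₀| + 1 := by
      have := abs_sub_abs_le_abs_sub u u₀
      rw [Metric.mem_ball, Real.dist_eq] at hu
      linarith
    refine (hlin u x).trans (mul_le_mul_of_nonneg_right ?_ (by positivity))
    exact mul_le_mul_of_nonneg_left (by linarith) hB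
  refine (hasDerivAt_integral_of_dominated_loc_of_deriv_le
    (F := fun u x => q (g x + u * h x) * gauss x)
    (F' := fun u x => deriv q (g x + u * h x) * h x * gauss x)
    (bound := fun x => C * (1 + A) ^ n * B * ((1 + |x|) ^ (n + 1) * gauss x))
    (Metric.ball_mem_nhds u₀ one_pos)
    (Eventually.of_forall fun u => (by fun_prop : Continuous _).aestronglyMeasurable)
    ((h0.comp (hlin u₀)).integrable_mul_gauss (by fun_prop))
    (by fun_prop : Continuous _).aestronglyMeasurable
    (Eventually.of_forall fun x u hu => ?_)
    ((integrable_one_add_abs_pow_mul_gauss (n + 1)).const_mul _)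
    (Eventually.of_forall fun x u _ => ?_)).2
  · rw [norm_mul, norm_mul, Real.norm_of_nonneg (gauss_nonneg x), Real.norm_eq_abs,
      Real.norm_eq_abs]
    calc |deriv q (g x + u * h x)| * |h x| * gauss x
        ≤ C * (1 + A) ^ n * (1 + |x|) ^ n * (B * (1 + |x|)) * gauss x := by
          have hq' := abs_le_of_abs_le_mul_one_add_abs hC (hball u hu x)
          gcongr
          exacts [gauss_nonneg x, (abs_nonneg _).trans hq', hhB x]
      _ = C * (1 + A) ^ n * B * ((1 + |x|) ^ (n + 1) * gauss x) := by ring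
  · have hlin' : HasDerivAt (fun u => g x + u * h x) (h x) u := by
      simpa using ((hasDerivAt_id u).mul_const (h x)).const_add (g x)
    exact (((hq.differentiable one_ne_zero _).hasDerivAt.comp u hlin').mul_const (gauss x))

def gaussSmooth (q : ℝ → ℝ) (t a : ℝ) : ℝ := ∫ x, q (t + a * x) * gauss x

lemma hasDerivAt_gaussSmooth_left {q : ℝ → ℝ} (hq : ContDiff ℝ 1 q) (h0 : PolyGrowth q)
    (h1 : PolyGrowth (deriv q)) (t a : ℝ) :
    HasDerivAt (fun t => gaussSmooth q t a) (gaussSmooth (deriv q) t a) t := by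
  have hB (x : ℝ) : |a * x| ≤ (|a| + 1) * (1 + |x|) := by
    rw [abs_mul]; nlinarith [abs_nonneg a, abs_nonneg x]
  have h1B (x : ℝ) : |(1 : ℝ)| ≤ (|a| + 1) * (1 + |x|) := by
    rw [abs_one]; nlinarith [abs_nonneg a, abs_nonneg x]
  simpa [gaussSmooth, add_comm] using hasDerivAt_integral_comp_add_mul_mul_gauss hq h0 h1
    (by fun_prop) continuous_const hB h1B t

lemma hasDerivAt_gaussSmooth_right {q : ℝ → ℝ} (hq : ContDiff ℝ 2 q) (h0 : PolyGrowth q)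
    (h1 : PolyGrowth (deriv q)) (h2 : PolyGrowth (deriv (deriv q))) (t a : ℝ) :
    HasDerivAt (gaussSmooth q t) (a * gaussSmooth (deriv (deriv q)) t a) a := by
  have hq' : ContDiff ℝ 1 (deriv q) := hq.deriv' (n := 1)
  have hB (x : ℝ) : |t| ≤ (|t| + 1) * (1 + |x|) := by nlinarith [abs_nonneg t, abs_nonneg x]
  have hidB (x : ℝ) : |x| ≤ (|t| + 1) * (1 + |x|) := by nlinarith [abs_nonneg t, abs_nonneg x]
  have hd := hasDerivAt_integral_comp_add_mul_mul_gauss (hq.of_le one_le_two) h0 h1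
    continuous_const continuous_id hB hidB a
  have hinner (x : ℝ) : HasDerivAt (fun x => deriv q (t + a * x))
      (deriv (deriv q) (t + a * x) * a) x := by
    have hlin : HasDerivAt (fun x => t + a * x) a x := by
      simpa using ((hasDerivAt_id x).const_mul a).const_add t
    exact (hq'.differentiable one_ne_zero _).hasDerivAt.comp x hlin
  have hstein := integral_mul_id_mul_gauss hinner (by fun_prop : Continuous _)
    (h1.comp_affine t a) ((h2.comp_affine t a).mul_const a)
  refine hd.congr_deriv ?_
  simp only [id, hstein, gaussSmooth, ← integral_const_mul]
  congr 1 with x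
  ring

lemma hasDerivAt_gaussSmooth_sqrt {q : ℝ → ℝ} (hq : ContDiff ℝ 2 q) (h0 : PolyGrowth q)
    (h1 : PolyGrowth (deriv q)) (h2 : PolyGrowth (deriv (deriv q))) (t c : ℝ) {v : ℝ}
    (hv : 0 < v + c) :
    HasDerivAt (fun v => gaussSmooth q t √(v + c))
      (gaussSmooth (deriv (deriv q)) t √(v + c) / 2) v := by
  have hsqrt : HasDerivAt (fun v => √(v + c)) (1 / (2 * √(v + c))) v :=
    ((hasDerivAt_id v).add_const c).sqrt hv.ne'
  have hpos : 0 < √(v + c) := Real.sqrt_pos.2 hv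
  refine ((hasDerivAt_gaussSmooth_right hq h0 h1 h2 t _).comp v hsqrt).congr_deriv ?_
  field_simp

lemma fderiv_apply_of_eq_comp_clm {E : Type*} [NormedAddCommGroup E] [NormedSpace ℝ E]
    {F : E → ℝ} {ψ : ℝ → ℝ} (L : E →L[ℝ] ℝ) (hF : ∀ y, F y = ψ (L y)) {x : E} {c : ℝ}
    (hψ : HasDerivAt ψ c (L x)) (v : E) :
    fderiv ℝ F x v = c * L v := by
  rw [show F = ψ ∘ L from funext hF, (hψ.comp_hasFDerivAt x L.hasFDerivAt).fderiv]
  rfl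

section PartialDerivatives

variable {K p : ℕ} {f : Fin K → (Fin p → ℝ) → (Fin p → Fin p → ℝ) → ℝ} {j : Fin K}
  {m : Fin p → ℝ} {d : Fin p → Fin p → ℝ} {r r' : Fin p} {ψ : ℝ → ℝ} {c : ℝ}

lemma gradMm_eq_single (hf : ∀ m', f j m' d = ψ (m' r)) (hψ : HasDerivAt ψ c (m r)) :
    gradMm f j m d = Pi.single r c := by
  funext k
  rw [gradMm, fderiv_apply_of_eq_comp_clm (ContinuousLinearMap.proj r) hf hψ]
  simp [Pi.single_apply, eq_comm]

lemma hessMm_eq_single {ψ' : ℝ → ℝ} (hf : ∀ m', f j m' d = ψ (m' r))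
    (hψ : ∀ t, HasDerivAt ψ (ψ' t) t) (hψ' : HasDerivAt ψ' c (m r)) :
    hessMm f j m d = Matrix.single r r c := by
  funext k l
  have hinner (m' : Fin p → ℝ) :
      fderiv ℝ (fun m'' => f j m'' d) m' (Pi.single l 1) =
        ψ' (m' r) * (Pi.single l 1 : Fin p → ℝ) r :=
    fderiv_apply_of_eq_comp_clm (ContinuousLinearMap.proj r : (Fin p → ℝ) →L[ℝ] ℝ) hf (hψ _) _
  rw [hessMm, fderiv_apply_of_eq_comp_clm (ContinuousLinearMap.proj r) hinner
    (hψ'.mul_const _)]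
  simp [Matrix.single_apply, Pi.single_apply, ite_and]

lemma gradDm_eq_single (hf : ∀ d', f j m d' = ψ (d' r r')) (hψ : HasDerivAt ψ c (d r r')) :
    gradDm f j m d = Matrix.single r r' c := by
  funext k l
  let L : (Fin p → Fin p → ℝ) →L[ℝ] ℝ :=
    (ContinuousLinearMap.proj r' : (Fin p → ℝ) →L[ℝ] ℝ).comp (ContinuousLinearMap.proj r)
  rw [gradDm, fderiv_apply_of_eq_comp_clm L hf hψ]
  rcases eq_or_ne r k with rfl | hrk
  · simp [L, Matrix.single_apply, Pi.single_apply]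
  · simp [L, hrk]

end PartialDerivatives

lemma Lmat_apply_eq_of_heat_equation {K : ℕ} (nuF : (Fin K → ℝ) → Fin K → ℝ)
    (etaF : (Fin K → ℝ) → Fin K → Fin K → ℝ) (lam : ℝ)
    {f : Fin K → (Fin K → ℝ) → (Fin K → Fin K → ℝ) → ℝ}
    {μ : Fin K → (Fin K → ℝ) → (Fin K → Fin K → ℝ) → Fin K → ℝ}
    {b ssT : Fin K → (Fin K → ℝ) → (Fin K → Fin K → ℝ) → Fin K → Fin K → ℝ}
    {m : Fin K → ℝ} {d : Fin K → Fin K → ℝ} {i : Fin K} {g h β : Fin K → ℝ}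
    (hgradM : ∀ j, gradMm f j m d = Pi.single j (g j))
    (hhess : ∀ j, hessMm f j m d = Matrix.single j j (h j))
    (hgradD : ∀ j, gradDm f j m d = Matrix.single j j (h j / 2))
    (hμ : μ i m d = 0) (hb : b i m d = Matrix.diagonal (-β))
    (hssT : ssT i m d = Matrix.diagonal β) :
    Lmat nuF etaF lam f μ b ssT m d i =
      (2 * lam)⁻¹ * ∑ j, etaF (fun j' => f j' m d) j j * β j * g j ^ 2 := by
  simp only [Lmat, hgradM, hhess, hgradD, hμ, hb, hssT, Pi.single_apply, Matrix.single_apply,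
    Matrix.diagonal_apply, Pi.zero_apply, Pi.neg_apply, mul_ite, ite_mul, mul_zero, zero_mul,
    Finset.sum_ite_eq', Finset.sum_ite_eq, Finset.mem_univ, if_true, and_self,
    Finset.sum_const_zero, add_zero, Finset.mul_sum, ← Finset.sum_add_distrib]
  exact Finset.sum_congr rfl fun j _ => by ring

end ARC

theorem ARC.L_additional_information_general
    {K : ℕ}
    (S : (Fin K → ℝ) → ℝ)
    (m : Fin K → ℝ) (d : Fin K → Fin K → ℝ)
    (hdpos : ∀ k, 0 < d k k)
    (s : Fin K → Fin K → ℝ) (hsdiag : ∀ j, 0 < s j j)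
    (rf : Fin K → ℝ → ℝ) (hrf : ∀ i, ContDiff ℝ 2 (rf i))
    (hgrowth : ∀ i, ARC.PolyGrowth2 (rf i))
    (f : Fin K → (Fin K → ℝ) → (Fin K → Fin K → ℝ) → ℝ)
    (hfdef : f = fun i m' d' => ∫ x : ℝ,
      rf i (m' i + Real.sqrt (d' i i + (s i i)⁻¹) * x) * ARC.gauss x)
    (μ : Fin K → (Fin K → ℝ) → (Fin K → Fin K → ℝ) → Fin K → ℝ)
    (b ssT : Fin K → (Fin K → ℝ) → (Fin K → Fin K → ℝ) → Fin K → Fin K → ℝ)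
    (hμ : μ = fun _ _ _ => 0)
    (hb : b = fun i _ d' k l =>
      if k = l then -(d' k k ^ 2 * (s i k / (1 + d' k k * s i k))) else 0)
    (hssT : ssT = fun i m' d' k l => -(b i m' d' k l)) :
    ∀ (i : Fin K) (lam : ℝ), 0 < lam →
      ARC.Lmat (ARC.nu S lam) (ARC.eta S lam) lam f μ b ssT m d i =
        (1 / (2 * lam)) * ∑ j,
          ARC.eta S lam (fun j' => f j' m d) j j * d j j ^ 2 *
            (s i j / (1 + d j j * s i j)) *
            (∫ x : ℝ, deriv (rf j) (m j + Real.sqrt (d j j + (s j j)⁻¹) * x) *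
              ARC.gauss x) ^ 2 := by
  intro i lam _
  subst hfdef hμ hb hssT
  have hvar (j : Fin K) : 0 < d j j + (s j j)⁻¹ := add_pos (hdpos j) (inv_pos.2 (hsdiag j))
  have hgr (j : Fin K) := (hgrowth j).polyGrowth
  have hrf1 (j : Fin K) : ContDiff ℝ 1 (rf j) := (hrf j).of_le one_le_two
  have hrf' (j : Fin K) : ContDiff ℝ 1 (deriv (rf j)) := (hrf j).deriv' (n := 1)
  rw [ARC.Lmat_apply_eq_of_heat_equation
    (g := fun j => ARC.gaussSmooth (deriv (rf j)) (m j) √(d j j + (s j j)⁻¹))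
    (h := fun j => ARC.gaussSmooth (deriv (deriv (rf j))) (m j) √(d j j + (s j j)⁻¹))
    (β := fun k => d k k ^ 2 * (s i k / (1 + d k k * s i k)))]
  · rw [one_div]
    exact congrArg _ (Finset.sum_congr rfl fun j _ => by simp only [ARC.gaussSmooth]; ring)
  · exact fun j => ARC.gradMm_eq_single (fun _ => rfl) (ARC.hasDerivAt_gaussSmooth_left
      (hrf1 j) (hgr j).1 (hgr j).2.1 _ _)
  · exact fun j => ARC.hessMm_eq_single (fun _ => rfl) (fun t => ARC.hasDerivAt_gaussSmooth_left
      (hrf1 j) (hgr j).1 (hgr j).2.1 t _)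
      (ARC.hasDerivAt_gaussSmooth_left (hrf' j) (hgr j).2.1 (hgr j).2.2 _ _)
  · exact fun j => ARC.gradDm_eq_single (fun _ => rfl)
      (ARC.hasDerivAt_gaussSmooth_sqrt (hrf j) (hgr j).1 (hgr j).2.1 (hgr j).2.2 _ _ (hvar j))
  · rfl
  all_goals ext k l; by_cases hkl : k = l <;> simp [hkl]

/-- Lemma A.5: explicit learning premium for the Gaussian bandit with additional
information: `L^λ_i(m,d) = (2λ)⁻¹ ∑_j η^λ_{jj}(f(m,d)) d_{jj}² (s_{ij}/(1+d_{jj}s_{ij})) g_j²`. -/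
theorem ARC.L_additional_information
    {K : ℕ} (hK : 0 < K)
    (S : (Fin K → ℝ) → ℝ) (hS : ARC.IsSmoothMax hK S)
    (m : Fin K → ℝ) (d : Fin K → Fin K → ℝ)
    (hdiag : ∀ k l, k ≠ l → d k l = 0) (hdpos : ∀ k, 0 < d k k)
    (s : Fin K → Fin K → ℝ) (hs : ∀ i j, 0 ≤ s i j) (hsdiag : ∀ j, 0 < s j j)
    (rf : Fin K → ℝ → ℝ) (hrf : ∀ i, ContDiff ℝ 2 (rf i))
    (hgrowth : ∀ i, ARC.PolyGrowth2 (rf i))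
    (f : Fin K → (Fin K → ℝ) → (Fin K → Fin K → ℝ) → ℝ)
    (hfdef : f = fun i m' d' => ∫ x : ℝ,
      rf i (m' i + Real.sqrt (d' i i + (s i i)⁻¹) * x) * ARC.gauss x)
    (μ : Fin K → (Fin K → ℝ) → (Fin K → Fin K → ℝ) → Fin K → ℝ)
    (b ssT : Fin K → (Fin K → ℝ) → (Fin K → Fin K → ℝ) → Fin K → Fin K → ℝ)
    (hμ : μ = fun _ _ _ => 0)
    (hb : b = fun i _ d' k l =>
      if k = l then -(d' k k ^ 2 * (s i k / (1 + d' k k * s i k))) else 0)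
    (hssT : ssT = fun i m' d' k l => -(b i m' d' k l)) :
    ∀ (i : Fin K) (lam : ℝ), 0 < lam →
      ARC.Lmat (ARC.nu S lam) (ARC.eta S lam) lam f μ b ssT m d i =
        (1 / (2 * lam)) * ∑ j,
          ARC.eta S lam (fun j' => f j' m d) j j * d j j ^ 2 *
            (s i j / (1 + d j j * s i j)) *
            (∫ x : ℝ, deriv (rf j) (m j + Real.sqrt (d j j + (s j j)⁻¹) * x) *
              ARC.gauss x) ^ 2 :=
  ARC.L_additional_information_general S m d hdpos s hsdiag rf hrf hgrowth f hfdef μ b ssT hμ hb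
    hssT
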